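/- arXiv:1702.07402 — 7 statements merged into one kernel-verified Lean document; each statement's English description precedes it below -/
import Mathlib

section
/- The rational function τ₁ = (X₁+X₂)(X₂+X₃)/(X₂(X₁+X₂+X₃)) in three variables is annihilated by the first-order differential operator D = X₁(X₁+2X₂+2X₃)∂/∂X₁ + X₂(X₂+2X₃)∂/∂X₂ + X₃²∂/∂X₃, i.e. D(τ₁) = 0 as a rational function identity. -/
/-! With `s = X₁ + X₂ + X₃`, each term of `D τ₁` turns out to be `X₁X₃/(X₂s²)` times a
polynomial cofactor, and the three cofactors sum to zero identically. The `∂/∂X₃` term follows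
from the `∂/∂X₁` one by the symmetry `X₁ ↔ X₃` of `τ₁`. -/

/-- The lattice `W₂` generator `τ₁ = (X₁+X₂)(X₂+X₃)/(X₂(X₁+X₂+X₃))`. -/
noncomputable def tau (a b c : ℝ) : ℝ := (a + b) * (b + c) / (b * (a + b + c))

theorem tau_comm (a b c : ℝ) : tau a b c = tau c b a := by
  unfold tau
  ring_nf

theorem hasDerivAt_tau_fst (a b c : ℝ) (hb : b ≠ 0) (hs : a + b + c ≠ 0) :
    HasDerivAt (fun t => tau t b c) (c * (b + c) / (b * (a + b + c) ^ 2)) a := by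
  have hnum : HasDerivAt (fun t => (t + b) * (b + c)) (b + c) a := by
    simpa using ((hasDerivAt_id a).add_const b).mul_const (b + c)
  have hden : HasDerivAt (fun t => b * (t + b + c)) b a := by
    simpa using (((hasDerivAt_id a).add_const b).add_const c).const_mul b
  refine (hnum.div hden (mul_ne_zero hb hs)).congr_deriv ?_
  field_simp
  ring

theorem hasDerivAt_tau_snd (a b c : ℝ) (hb : b ≠ 0) (hs : a + b + c ≠ 0) :
    HasDerivAt (fun t => tau a t c) (-(a * c * (a + 2 * b + c)) / (b * (a + b + c)) ^ 2) b := by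
  have hnum : HasDerivAt (fun t => (a + t) * (t + c)) (a + 2 * b + c) b := by
    refine (((hasDerivAt_id b).const_add a).mul ((hasDerivAt_id b).add_const c)).congr_deriv ?_
    simp only [id_eq]
    ring
  have hden : HasDerivAt (fun t => t * (a + t + c)) (a + 2 * b + c) b := by
    refine ((hasDerivAt_id b).mul (((hasDerivAt_id b).const_add a).add_const c)).congr_deriv ?_
    simp only [id_eq]
    ring
  refine (hnum.div hden (mul_ne_zero hb hs)).congr_deriv ?_
  field_simp
  ring

theorem hasDerivAt_tau_thd (a b c : ℝ) (hb : b ≠ 0) (hs : a + b + c ≠ 0) :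
    HasDerivAt (fun t => tau a b t) (a * (a + b) / (b * (a + b + c) ^ 2)) c := by
  have hs' : c + b + a ≠ 0 := by rwa [add_comm c, add_right_comm, add_comm b]
  simp only [tau_comm a b]
  convert hasDerivAt_tau_fst c b a hb hs' using 2 <;> ring

/-- `τ₁` is annihilated by
`D = X₁(X₁+2X₂+2X₃)∂/∂X₁ + X₂(X₂+2X₃)∂/∂X₂ + X₃²∂/∂X₃`. -/
theorem stmt_0 (X1 X2 X3 : ℝ) (hb : X2 ≠ 0) (hs : X1 + X2 + X3 ≠ 0) :
    X1 * (X1 + 2 * X2 + 2 * X3) * deriv (fun t => tau t X2 X3) X1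
      + X2 * (X2 + 2 * X3) * deriv (fun t => tau X1 t X3) X2
      + X3 ^ 2 * deriv (fun t => tau X1 X2 t) X3 = 0 := by
  rw [(hasDerivAt_tau_fst X1 X2 X3 hb hs).deriv, (hasDerivAt_tau_snd X1 X2 X3 hb hs).deriv,
    (hasDerivAt_tau_thd X1 X2 X3 hb hs).deriv]
  field_simp
  ring
end

section
/- With τ₁ = (X₁+X₂)(X₂+X₃)/(X₂(X₁+X₂+X₃)) and τᵢ = (Xᵢ+Xᵢ₊₁)(Xᵢ₊₁+Xᵢ₊₂)/(Xᵢ₊₁(Xᵢ+Xᵢ₊₁+Xᵢ₊₂)), and the Poisson bracket determined by {Xᵢ,Xⱼ} = 2XᵢXⱼ for i<j, one has {τ₁,τᵢ} = 0 for all i ≥ 4 (locality of the lattice W₂ algebra). -/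
/-- Partial derivative with respect to the `k`-th coordinate (variables indexed by `ℕ`). -/
noncomputable def pdN (f : (ℕ → ℝ) → ℝ) (k : ℕ) (x : ℕ → ℝ) : ℝ :=
  deriv (fun t => f (Function.update x k t)) (x k)

/-- Poisson bracket determined by `{Xₐ,X_b} = 2XₐX_b` for `a < b`, with the sum taken
over the indices `0, …, N−1` (which covers the supports of the functions involved). -/
noncomputable def pbN (N : ℕ) (f g : (ℕ → ℝ) → ℝ) (x : ℕ → ℝ) : ℝ :=
  ∑ a ∈ Finset.range N, ∑ b ∈ Finset.range N,
    if a < b then (pdN f a x * pdN g b x - pdN f b x * pdN g a x) * (2 * x a * x b) else 0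

/-- `τ_k = (X_k+X_{k+1})(X_{k+1}+X_{k+2})/(X_{k+1}(X_k+X_{k+1}+X_{k+2}))` (1-based indices). -/
noncomputable def tauN (k : ℕ) (x : ℕ → ℝ) : ℝ :=
  (x k + x (k + 1)) * (x (k + 1) + x (k + 2)) / (x (k + 1) * (x k + x (k + 1) + x (k + 2)))

/-! `τ₁` depends only on `X₁, X₂, X₃` and `τᵢ` only on `Xᵢ, Xᵢ₊₁, Xᵢ₊₂`, and for `i ≥ 4` every
index of the first set lies below every index of the second. For two such functions every summand
`(a, b)` of the bracket equals `2 (Xₐ ∂ₐτ₁)(X_b ∂_bτᵢ)`, so the bracket factors as `2 E(τ₁) E(τᵢ)`,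
where `E = ∑ₐ Xₐ ∂ₐ` is the Euler operator. As `τ` is homogeneous of degree zero, `E(τ₁) = 0`. -/

open Finset Function

noncomputable def eulerN (N : ℕ) (f : (ℕ → ℝ) → ℝ) (x : ℕ → ℝ) : ℝ :=
  ∑ a ∈ range N, x a * pdN f a x

section Support

variable {f g : (ℕ → ℝ) → ℝ}

theorem pdN_eq_zero_of_dependsOn {s : Set ℕ} (hf : DependsOn f s) {k : ℕ} (hk : k ∉ s)
    (x : ℕ → ℝ) : pdN f k x = 0 := by
  have hconst : (fun t => f (update x k t)) = fun _ => f x :=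
    funext fun t => hf fun j hj => update_of_ne (ne_of_mem_of_not_mem hj hk) t x
  rw [pdN, hconst, deriv_const]

theorem eulerN_eq_sum_of_dependsOn {s : Finset ℕ} (hf : DependsOn f s) {N : ℕ}
    (hsN : s ⊆ range N) (x : ℕ → ℝ) : eulerN N f x = ∑ a ∈ s, x a * pdN f a x :=
  (sum_subset hsN fun a _ ha => by
    rw [pdN_eq_zero_of_dependsOn hf (by simpa using ha), mul_zero]).symm

theorem pbN_eq_two_mul_eulerN_mul_eulerN {s t : Set ℕ} (hf : DependsOn f s)
    (hg : DependsOn g t) (hst : ∀ a ∈ s, ∀ b ∈ t, a < b) (N : ℕ) (x : ℕ → ℝ) :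
    pbN N f g x = 2 * eulerN N f x * eulerN N g x := by
  have summand : ∀ a b, (if a < b then (pdN f a x * pdN g b x - pdN f b x * pdN g a x) *
      (2 * x a * x b) else 0) = 2 * (x a * pdN f a x) * (x b * pdN g b x) := by
    intro a b
    split_ifs with hab
    · have hcross : pdN f b x * pdN g a x = 0 := by
        by_cases hb : b ∈ s
        · rw [pdN_eq_zero_of_dependsOn hg (fun ha => (hst b hb a ha).not_gt hab), mul_zero]
        · rw [pdN_eq_zero_of_dependsOn hf hb, zero_mul]
      rw [hcross]
      ring
    · by_cases ha : a ∈ s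
      · rw [pdN_eq_zero_of_dependsOn hg (fun hb => hab (hst a ha b hb))]
        ring
      · rw [pdN_eq_zero_of_dependsOn hf ha]
        ring
  rw [pbN, eulerN, eulerN, mul_assoc, sum_mul_sum, mul_sum]
  refine sum_congr rfl fun a _ => ?_
  rw [mul_sum]
  exact sum_congr rfl fun b _ => by rw [summand]; ring

end Support

noncomputable def tau3 (a b c : ℝ) : ℝ := (a + b) * (b + c) / (b * (a + b + c))

section Tau3

variable {a b c : ℝ}

theorem hasDerivAt_tau3_first (hb : b ≠ 0) (hs : a + b + c ≠ 0) :
    HasDerivAt (tau3 · b c) (c * (b + c) / (b * (a + b + c) ^ 2)) a := by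
  have hden : b * (a + b + c) ≠ 0 := mul_ne_zero hb hs
  refine ((((hasDerivAt_id' a).add_const b).mul_const (b + c)).div
    ((((hasDerivAt_id' a).add_const b).add_const c).const_mul b) hden).congr_deriv ?_
  field_simp
  ring

theorem hasDerivAt_tau3_second (hb : b ≠ 0) (hs : a + b + c ≠ 0) :
    HasDerivAt (tau3 a · c) (-(a * c * (a + 2 * b + c)) / (b * (a + b + c)) ^ 2) b := by
  have hden : b * (a + b + c) ≠ 0 := mul_ne_zero hb hs
  refine ((((hasDerivAt_id' b).const_add a).fun_mul ((hasDerivAt_id' b).add_const c)).div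
    ((hasDerivAt_id' b).fun_mul (((hasDerivAt_id' b).const_add a).add_const c)) hden).congr_deriv ?_
  field_simp
  ring

theorem hasDerivAt_tau3_third (hb : b ≠ 0) (hs : a + b + c ≠ 0) :
    HasDerivAt (tau3 a b ·) (a * (a + b) / (b * (a + b + c) ^ 2)) c := by
  have hden : b * (a + b + c) ≠ 0 := mul_ne_zero hb hs
  refine ((((hasDerivAt_id' c).const_add b).const_mul (a + b)).div
    (((hasDerivAt_id' c).const_add (a + b)).const_mul b) hden).congr_deriv ?_
  field_simp
  ring

theorem euler_tau3 (hb : b ≠ 0) (hs : a + b + c ≠ 0) :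
    a * deriv (tau3 · b c) a + b * deriv (tau3 a · c) b + c * deriv (tau3 a b ·) c = 0 := by
  rw [(hasDerivAt_tau3_first hb hs).deriv, (hasDerivAt_tau3_second hb hs).deriv,
    (hasDerivAt_tau3_third hb hs).deriv]
  field_simp
  ring

end Tau3

theorem tauN_eq_tau3 (k : ℕ) (x : ℕ → ℝ) : tauN k x = tau3 (x k) (x (k + 1)) (x (k + 2)) := rfl

theorem dependsOn_tauN (k : ℕ) :
    DependsOn (tauN k) (({k, k + 1, k + 2} : Finset ℕ) : Set ℕ) := by
  intro x y hxy
  simp only [tauN_eq_tau3, hxy k (by simp), hxy (k + 1) (by simp), hxy (k + 2) (by simp)]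

section PartialDerivatives

variable (k : ℕ) (x : ℕ → ℝ)

theorem pdN_tauN_self : pdN (tauN k) k x = deriv (tau3 · (x (k + 1)) (x (k + 2))) (x k) := by
  simp only [pdN, tauN_eq_tau3, update_self, update_of_ne (by omega : k + 1 ≠ k),
    update_of_ne (by omega : k + 2 ≠ k)]

theorem pdN_tauN_add_one :
    pdN (tauN k) (k + 1) x = deriv (tau3 (x k) · (x (k + 2))) (x (k + 1)) := by
  simp only [pdN, tauN_eq_tau3, update_self, update_of_ne (by omega : k ≠ k + 1),
    update_of_ne (by omega : k + 2 ≠ k + 1)]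

theorem pdN_tauN_add_two :
    pdN (tauN k) (k + 2) x = deriv (tau3 (x k) (x (k + 1)) ·) (x (k + 2)) := by
  simp only [pdN, tauN_eq_tau3, update_self, update_of_ne (by omega : k ≠ k + 2),
    update_of_ne (by omega : k + 1 ≠ k + 2)]

end PartialDerivatives

theorem eulerN_tauN {N k : ℕ} (hN : k + 2 < N) {x : ℕ → ℝ} (hb : x (k + 1) ≠ 0)
    (hs : x k + x (k + 1) + x (k + 2) ≠ 0) : eulerN N (tauN k) x = 0 := by
  have hsN : ({k, k + 1, k + 2} : Finset ℕ) ⊆ range N := by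
    intro a
    simp only [mem_insert, mem_singleton, mem_range]
    omega
  rw [eulerN_eq_sum_of_dependsOn (dependsOn_tauN k) hsN,
    sum_insert (by simp), sum_insert (by simp), sum_singleton, ← add_assoc,
    pdN_tauN_self, pdN_tauN_add_one, pdN_tauN_add_two]
  exact euler_tau3 hb hs

theorem stmt_5_general (i : ℕ) (hi : 4 ≤ i) (x : ℕ → ℝ)
    (h1 : x 2 ≠ 0) (h2 : x 1 + x 2 + x 3 ≠ 0) :
    pbN (i + 3) (tauN 1) (tauN i) x = 0 := by
  have hsep : ∀ a ∈ (({1, 2, 3} : Finset ℕ) : Set ℕ),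
      ∀ b ∈ (({i, i + 1, i + 2} : Finset ℕ) : Set ℕ), a < b := by
    simp only [coe_insert, coe_singleton, Set.mem_insert_iff, Set.mem_singleton_iff]
    omega
  rw [pbN_eq_two_mul_eulerN_mul_eulerN (dependsOn_tauN 1) (dependsOn_tauN i) hsep,
    eulerN_tauN (by omega) h1 h2, mul_zero, zero_mul]

/-- Locality of the lattice `W₂` algebra: `{τ₁, τᵢ} = 0` for all `i ≥ 4`. -/
theorem stmt_5 (i : ℕ) (hi : 4 ≤ i) (x : ℕ → ℝ)
    (h1 : x 2 ≠ 0) (h2 : x 1 + x 2 + x 3 ≠ 0)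
    (h3 : x (i + 1) ≠ 0) (h4 : x i + x (i + 1) + x (i + 2) ≠ 0) :
    pbN (i + 3) (tauN 1) (tauN i) x = 0 :=
  stmt_5_general i hi x h1 h2
end

section
/- The rational function g(v₂,v₃,w₂,w₃) = C(v₂w₂(1+(1+v₂)w₂+(1+v₂+v₃)w₃)/((v₂+v₃+v₃w₂)w₃)) — i.e., any function of the single first integral I = v₂w₂(1+(1+v₂)w₂+(1+v₂+v₃)w₃)/((v₂+v₃+v₃w₂)w₃) — satisfies the first-order PDE (v₂+v₃)w₃·∂g/∂w₃ + v₂w₂·∂g/∂w₂ − v₃(1+2v₂+v₃)·∂g/∂v₃ − v₂(1+v₂)·∂g/∂v₂ = 0. In particular, the operator annihilates I itself. -/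
/-- The first integral `I = v₂w₂(1+(1+v₂)w₂+(1+v₂+v₃)w₃)/((v₂+v₃+v₃w₂)w₃)`. -/
noncomputable def Ifun (v2 v3 w2 w3 : ℝ) : ℝ :=
  v2 * w2 * (1 + (1 + v2) * w2 + (1 + v2 + v3) * w3) / ((v2 + v3 + v3 * w2) * w3)

/-!
The operator is a derivation `X`, so `X (C ∘ I) = C'(I) · X I` and it suffices to show `X I = 0`.
Writing `I = N / E` with `N = v₂w₂(1+(1+v₂)w₂+(1+v₂+v₃)w₃)` and `E = (v₂+v₃+v₃w₂)w₃`, both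
polynomials are Darboux polynomials of `X` with the same cofactor: `X N = -N` and `X E = -E`
(indeed `X v₂ = -(1+v₂)v₂`, `X w₂ = v₂w₂`, `X w₃ = (v₂+v₃)w₃`, `X (v₂+v₃+v₃w₂) = -(1+v₂+v₃)(v₂+v₃+v₃w₂)`
and `X (1+(1+v₂)w₂+(1+v₂+v₃)w₃) = 0`). Hence `X (N / E) = (X N · E - N · X E) / E² = 0`.
-/

noncomputable def derivAlong (a₁ a₂ a₃ a₄ : ℝ) (f : ℝ → ℝ → ℝ → ℝ → ℝ) (x₁ x₂ x₃ x₄ : ℝ) : ℝ :=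
  a₁ * deriv (fun t => f t x₂ x₃ x₄) x₁ + a₂ * deriv (fun t => f x₁ t x₃ x₄) x₂
    + a₃ * deriv (fun t => f x₁ x₂ t x₄) x₃ + a₄ * deriv (fun t => f x₁ x₂ x₃ t) x₄

def PartiallyDifferentiableAt (f : ℝ → ℝ → ℝ → ℝ → ℝ) (x₁ x₂ x₃ x₄ : ℝ) : Prop :=
  DifferentiableAt ℝ (fun t => f t x₂ x₃ x₄) x₁ ∧ DifferentiableAt ℝ (fun t => f x₁ t x₃ x₄) x₂ ∧
    DifferentiableAt ℝ (fun t => f x₁ x₂ t x₄) x₃ ∧ DifferentiableAt ℝ (fun t => f x₁ x₂ x₃ t) x₄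

section Derivation

variable (a₁ a₂ a₃ a₄ : ℝ) {f g : ℝ → ℝ → ℝ → ℝ → ℝ} {x₁ x₂ x₃ x₄ : ℝ}

theorem PartiallyDifferentiableAt.div (hf : PartiallyDifferentiableAt f x₁ x₂ x₃ x₄)
    (hg : PartiallyDifferentiableAt g x₁ x₂ x₃ x₄) (h : g x₁ x₂ x₃ x₄ ≠ 0) :
    PartiallyDifferentiableAt (fun y₁ y₂ y₃ y₄ => f y₁ y₂ y₃ y₄ / g y₁ y₂ y₃ y₄) x₁ x₂ x₃ x₄ :=
  ⟨hf.1.div hg.1 h, hf.2.1.div hg.2.1 h, hf.2.2.1.div hg.2.2.1 h, hf.2.2.2.div hg.2.2.2 h⟩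

theorem derivAlong_comp {C : ℝ → ℝ}
    (hC : DifferentiableAt ℝ C (f x₁ x₂ x₃ x₄)) (hf : PartiallyDifferentiableAt f x₁ x₂ x₃ x₄) :
    derivAlong a₁ a₂ a₃ a₄ (fun y₁ y₂ y₃ y₄ => C (f y₁ y₂ y₃ y₄)) x₁ x₂ x₃ x₄
      = deriv C (f x₁ x₂ x₃ x₄) * derivAlong a₁ a₂ a₃ a₄ f x₁ x₂ x₃ x₄ := by
  obtain ⟨h₁, h₂, h₃, h₄⟩ := hf
  rw [derivAlong, ← Function.comp_def C, ← Function.comp_def C, ← Function.comp_def C,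
    ← Function.comp_def C, (hC.hasDerivAt.comp x₁ h₁.hasDerivAt).deriv,
    (hC.hasDerivAt.comp x₂ h₂.hasDerivAt).deriv, (hC.hasDerivAt.comp x₃ h₃.hasDerivAt).deriv,
    (hC.hasDerivAt.comp x₄ h₄.hasDerivAt).deriv, derivAlong]
  ring

theorem derivAlong_div (hf : PartiallyDifferentiableAt f x₁ x₂ x₃ x₄)
    (hg : PartiallyDifferentiableAt g x₁ x₂ x₃ x₄) (h : g x₁ x₂ x₃ x₄ ≠ 0) :
    derivAlong a₁ a₂ a₃ a₄ (fun y₁ y₂ y₃ y₄ => f y₁ y₂ y₃ y₄ / g y₁ y₂ y₃ y₄) x₁ x₂ x₃ x₄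
      = (derivAlong a₁ a₂ a₃ a₄ f x₁ x₂ x₃ x₄ * g x₁ x₂ x₃ x₄
          - f x₁ x₂ x₃ x₄ * derivAlong a₁ a₂ a₃ a₄ g x₁ x₂ x₃ x₄) / g x₁ x₂ x₃ x₄ ^ 2 := by
  obtain ⟨hf₁, hf₂, hf₃, hf₄⟩ := hf
  obtain ⟨hg₁, hg₂, hg₃, hg₄⟩ := hg
  rw [derivAlong, (hf₁.hasDerivAt.fun_div hg₁.hasDerivAt h).deriv,
    (hf₂.hasDerivAt.fun_div hg₂.hasDerivAt h).deriv, (hf₃.hasDerivAt.fun_div hg₃.hasDerivAt h).deriv,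
    (hf₄.hasDerivAt.fun_div hg₄.hasDerivAt h).deriv, derivAlong, derivAlong]
  field_simp
  ring

theorem derivAlong_div_eq_zero_of_cofactor (k : ℝ)
    (hf : PartiallyDifferentiableAt f x₁ x₂ x₃ x₄) (hg : PartiallyDifferentiableAt g x₁ x₂ x₃ x₄)
    (h : g x₁ x₂ x₃ x₄ ≠ 0)
    (hXf : derivAlong a₁ a₂ a₃ a₄ f x₁ x₂ x₃ x₄ = k * f x₁ x₂ x₃ x₄)
    (hXg : derivAlong a₁ a₂ a₃ a₄ g x₁ x₂ x₃ x₄ = k * g x₁ x₂ x₃ x₄) :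
    derivAlong a₁ a₂ a₃ a₄ (fun y₁ y₂ y₃ y₄ => f y₁ y₂ y₃ y₄ / g y₁ y₂ y₃ y₄) x₁ x₂ x₃ x₄ = 0 := by
  rw [derivAlong_div a₁ a₂ a₃ a₄ hf hg h, hXf, hXg]
  ring

end Derivation

section FirstIntegral

def ifunNum (v2 v3 w2 w3 : ℝ) : ℝ := v2 * w2 * (1 + (1 + v2) * w2 + (1 + v2 + v3) * w3)

def ifunDen (v2 v3 w2 w3 : ℝ) : ℝ := (v2 + v3 + v3 * w2) * w3

noncomputable def pdeOp (f : ℝ → ℝ → ℝ → ℝ → ℝ) (v2 v3 w2 w3 : ℝ) : ℝ :=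
  derivAlong (-(v2 * (1 + v2))) (-(v3 * (1 + 2 * v2 + v3))) (v2 * w2) ((v2 + v3) * w3)
    f v2 v3 w2 w3

variable (v2 v3 w2 w3 : ℝ)

theorem partiallyDifferentiableAt_ifunNum : PartiallyDifferentiableAt ifunNum v2 v3 w2 w3 := by
  unfold PartiallyDifferentiableAt ifunNum
  refine ⟨?_, ?_, ?_, ?_⟩ <;> fun_prop

theorem partiallyDifferentiableAt_ifunDen : PartiallyDifferentiableAt ifunDen v2 v3 w2 w3 := by
  unfold PartiallyDifferentiableAt ifunDen
  refine ⟨?_, ?_, ?_, ?_⟩ <;> fun_prop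

theorem pdeOp_ifunNum : pdeOp ifunNum v2 v3 w2 w3 = -1 * ifunNum v2 v3 w2 w3 := by
  unfold pdeOp derivAlong ifunNum
  simp (disch := fun_prop)
  ring

theorem pdeOp_ifunDen : pdeOp ifunDen v2 v3 w2 w3 = -1 * ifunDen v2 v3 w2 w3 := by
  unfold pdeOp derivAlong ifunDen
  simp (disch := fun_prop)
  ring

theorem pdeOp_Ifun (h : ifunDen v2 v3 w2 w3 ≠ 0) : pdeOp Ifun v2 v3 w2 w3 = 0 :=
  derivAlong_div_eq_zero_of_cofactor _ _ _ _ (-1) (partiallyDifferentiableAt_ifunNum ..)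
    (partiallyDifferentiableAt_ifunDen ..) h (pdeOp_ifunNum ..) (pdeOp_ifunDen ..)

end FirstIntegral

/-- Any (differentiable) function `g = C ∘ I` of the first integral `I` satisfies the PDE
`(v₂+v₃)w₃ ∂g/∂w₃ + v₂w₂ ∂g/∂w₂ − v₃(1+2v₂+v₃) ∂g/∂v₃ − v₂(1+v₂) ∂g/∂v₂ = 0`;
in particular (taking `C = id`) the operator annihilates `I` itself. -/
theorem stmt_7 (v2 v3 w2 w3 : ℝ)
    (hd : v2 + v3 + v3 * w2 ≠ 0) (hw3 : w3 ≠ 0)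
    (C : ℝ → ℝ) (hC : DifferentiableAt ℝ C (Ifun v2 v3 w2 w3)) :
    (v2 + v3) * w3 * deriv (fun t => C (Ifun v2 v3 w2 t)) w3
      + v2 * w2 * deriv (fun t => C (Ifun v2 v3 t w3)) w2
      - v3 * (1 + 2 * v2 + v3) * deriv (fun t => C (Ifun v2 t w2 w3)) v3
      - v2 * (1 + v2) * deriv (fun t => C (Ifun t v3 w2 w3)) v2 = 0 := by
  have hden : ifunDen v2 v3 w2 w3 ≠ 0 := mul_ne_zero hd hw3
  have hI : PartiallyDifferentiableAt Ifun v2 v3 w2 w3 :=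
    (partiallyDifferentiableAt_ifunNum ..).div (partiallyDifferentiableAt_ifunDen ..) hden
  calc _ = pdeOp (fun y₁ y₂ y₃ y₄ => C (Ifun y₁ y₂ y₃ y₄)) v2 v3 w2 w3 := by
        rw [pdeOp, derivAlong]; ring
    _ = deriv C (Ifun v2 v3 w2 w3) * pdeOp Ifun v2 v3 w2 w3 := derivAlong_comp _ _ _ _ hC hI
    _ = 0 := by rw [pdeOp_Ifun v2 v3 w2 w3 hden, mul_zero]
end

section
/- The rational function I = v₂w₂(1+(1+v₂)w₂+(1+v₂+v₃)w₃)/((v₂+v₃+v₃w₂)w₃) is annihilated by the first-order differential operator −w₃(1+2w₂+w₃)∂/∂w₃ − w₂(1+w₂)∂/∂w₂ + v₃(1+w₂)∂/∂v₃ + v₂∂/∂v₂. -/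
/-!
In each of its four variables `I` is a polynomial of degree at most two divided by a polynomial
of degree one, so the quotient rule gives each partial derivative in closed form.  With
`S = v₂ + v₃ + v₃w₂`, all four have a denominator dividing `w₃²S²`, and after clearing it the
claim is a polynomial identity.  It holds because the numerator and the denominator of `I` are
Darboux polynomials of the operator with the same cofactor `-(2w₂ + w₃)`.
-/

theorem hasDerivAt_quadratic_div_linear {a b c d e x : ℝ} (hx : d + e * x ≠ 0) :
    HasDerivAt (fun t => (a + b * t + c * t ^ 2) / (d + e * t))
      (((b + 2 * c * x) * (d + e * x) - (a + b * x + c * x ^ 2) * e) / (d + e * x) ^ 2) x := by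
  have hnum : HasDerivAt (fun t => a + b * t + c * t ^ 2) (b + 2 * c * x) x :=
    ((((hasDerivAt_id x).const_mul b).const_add a).add
      ((hasDerivAt_pow 2 x).const_mul c)).congr_deriv (by norm_num; ring)
  have hden : HasDerivAt (fun t => d + e * t) e x := by
    simpa using ((hasDerivAt_id x).const_mul e).const_add d
  exact hnum.div hden hx

section PartialDerivatives

variable {v2 v3 w2 w3 : ℝ}

theorem deriv_Ifun_w3 (hd : v2 + v3 + v3 * w2 ≠ 0) (hw3 : w3 ≠ 0) :
    deriv (fun t => Ifun v2 v3 w2 t) w3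
      = -(v2 * w2 * (1 + (1 + v2) * w2)) / ((v2 + v3 + v3 * w2) * w3 ^ 2) := by
  have hI : (fun t => Ifun v2 v3 w2 t) = fun t =>
      (v2 * w2 * (1 + (1 + v2) * w2) + v2 * w2 * (1 + v2 + v3) * t + 0 * t ^ 2)
        / (0 + (v2 + v3 + v3 * w2) * t) := by
    funext t; unfold Ifun; ring
  rw [hI, (hasDerivAt_quadratic_div_linear (by simpa using mul_ne_zero hd hw3)).deriv]
  simp only [zero_add, zero_mul, mul_zero, add_zero]
  field_simp
  ring

theorem deriv_Ifun_w2 (hd : v2 + v3 + v3 * w2 ≠ 0) (hw3 : w3 ≠ 0) :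
    deriv (fun t => Ifun v2 v3 t w3) w2
      = v2 * ((1 + 2 * (1 + v2) * w2 + (1 + v2 + v3) * w3) * (v2 + v3 + v3 * w2)
          - v3 * w2 * (1 + (1 + v2) * w2 + (1 + v2 + v3) * w3))
        / (w3 * (v2 + v3 + v3 * w2) ^ 2) := by
  have hI : (fun t => Ifun v2 v3 t w3) = fun t =>
      (0 + v2 * (1 + (1 + v2 + v3) * w3) * t + v2 * (1 + v2) * t ^ 2)
        / ((v2 + v3) * w3 + v3 * w3 * t) := by
    funext t; unfold Ifun; ring
  have hx : (v2 + v3) * w3 + v3 * w3 * w2 ≠ 0 := by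
    convert mul_ne_zero hd hw3 using 1; ring
  rw [hI, (hasDerivAt_quadratic_div_linear hx).deriv]
  field_simp
  ring

theorem deriv_Ifun_v3 (hd : v2 + v3 + v3 * w2 ≠ 0) (hw3 : w3 ≠ 0) :
    deriv (fun t => Ifun v2 t w2 w3) v3
      = v2 * w2 * (v2 * w3 - (1 + w2) * (1 + (1 + v2) * w2 + (1 + v2) * w3))
        / (w3 * (v2 + v3 + v3 * w2) ^ 2) := by
  have hI : (fun t => Ifun v2 t w2 w3) = fun t =>
      (v2 * w2 * (1 + (1 + v2) * w2 + (1 + v2) * w3) + v2 * w2 * w3 * t + 0 * t ^ 2)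
        / (v2 * w3 + (1 + w2) * w3 * t) := by
    funext t; unfold Ifun; ring
  have hx : v2 * w3 + (1 + w2) * w3 * v3 ≠ 0 := by
    convert mul_ne_zero hd hw3 using 1; ring
  rw [hI, (hasDerivAt_quadratic_div_linear hx).deriv]
  field_simp
  ring

theorem deriv_Ifun_v2 (hd : v2 + v3 + v3 * w2 ≠ 0) (hw3 : w3 ≠ 0) :
    deriv (fun t => Ifun t v3 w2 w3) v2
      = w2 * ((1 + (1 + 2 * v2) * w2 + (1 + 2 * v2 + v3) * w3) * (v2 + v3 + v3 * w2)
          - v2 * (1 + (1 + v2) * w2 + (1 + v2 + v3) * w3))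
        / (w3 * (v2 + v3 + v3 * w2) ^ 2) := by
  have hI : (fun t => Ifun t v3 w2 w3) = fun t =>
      (0 + w2 * (1 + w2 + (1 + v3) * w3) * t + w2 * (w2 + w3) * t ^ 2)
        / ((v3 + v3 * w2) * w3 + w3 * t) := by
    funext t; unfold Ifun; ring
  have hx : (v3 + v3 * w2) * w3 + w3 * v2 ≠ 0 := by
    convert mul_ne_zero hd hw3 using 1; ring
  rw [hI, (hasDerivAt_quadratic_div_linear hx).deriv]
  field_simp
  ring

end PartialDerivatives

/-- `I` is annihilated by
`−w₃(1+2w₂+w₃)∂/∂w₃ − w₂(1+w₂)∂/∂w₂ + v₃(1+w₂)∂/∂v₃ + v₂∂/∂v₂`. -/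
theorem stmt_8 (v2 v3 w2 w3 : ℝ)
    (hd : v2 + v3 + v3 * w2 ≠ 0) (hw3 : w3 ≠ 0) :
    -(w3 * (1 + 2 * w2 + w3)) * deriv (fun t => Ifun v2 v3 w2 t) w3
      - w2 * (1 + w2) * deriv (fun t => Ifun v2 v3 t w3) w2
      + v3 * (1 + w2) * deriv (fun t => Ifun v2 t w2 w3) v3
      + v2 * deriv (fun t => Ifun t v3 w2 w3) v2 = 0 := by
  rw [deriv_Ifun_w3 hd hw3, deriv_Ifun_w2 hd hw3, deriv_Ifun_v3 hd hw3, deriv_Ifun_v2 hd hw3]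
  field_simp
  ring
end

section
/- The sl₃ generator τ₁ = X₂Y₂(X₃Y₃ + X₂(Y₂+Y₃) + X₁(Y₁+Y₂+Y₃)) / ((X₂Y₂ + X₁(Y₁+Y₂))(X₃Y₃ + X₂(Y₂+Y₃))) is annihilated by the operator D_X = X₁(X₁+2X₂+2X₃)∂/∂X₁ + X₂(X₂+2X₃)∂/∂X₂ + X₃²∂/∂X₃ − Y₁(X₂+X₃)∂/∂Y₁ − Y₂X₃∂/∂Y₂. -/
/-!
The operator `D_X` is a derivation, and `τ₁ = (X₂Y₂ · C) / (A · B)` with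
`A = X₂Y₂ + X₁(Y₁+Y₂)`, `B = X₃Y₃ + X₂(Y₂+Y₃)`, `C = X₃Y₃ + X₂(Y₂+Y₃) + X₁(Y₁+Y₂+Y₃)`.
Each of the four factors is an eigenfunction of `D_X` (a Darboux polynomial):
`D_X A = (X₁+X₂+X₃) A`, `D_X C = (X₁+X₂+X₃) C`, `D_X B = (X₂+X₃) B`, `D_X (X₂Y₂) = (X₂+X₃) X₂Y₂`.
So numerator and denominator have the same cofactor `X₁+2X₂+2X₃`, and by the quotient rule
their ratio is annihilated.
-/

/-- The `sl₃` lattice `W`-algebra generator `τ₁`. -/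
noncomputable def tauSl3 (x1 x2 x3 y1 y2 y3 : ℝ) : ℝ :=
  x2 * y2 * (x3 * y3 + x2 * (y2 + y3) + x1 * (y1 + y2 + y3)) /
    ((x2 * y2 + x1 * (y1 + y2)) * (x3 * y3 + x2 * (y2 + y3)))

section ScreeningX

variable (F G : ℝ → ℝ → ℝ → ℝ → ℝ → ℝ → ℝ) (x1 x2 x3 y1 y2 y3 : ℝ)

noncomputable def screeningX : ℝ :=
  x1 * (x1 + 2 * x2 + 2 * x3) * deriv (fun t => F t x2 x3 y1 y2 y3) x1
    + x2 * (x2 + 2 * x3) * deriv (fun t => F x1 t x3 y1 y2 y3) x2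
    + x3 ^ 2 * deriv (fun t => F x1 x2 t y1 y2 y3) x3
    - y1 * (x2 + x3) * deriv (fun t => F x1 x2 x3 t y2 y3) y1
    - y2 * x3 * deriv (fun t => F x1 x2 x3 y1 t y3) y2

def SliceDifferentiableAt : Prop :=
  DifferentiableAt ℝ (fun t => F t x2 x3 y1 y2 y3) x1
    ∧ DifferentiableAt ℝ (fun t => F x1 t x3 y1 y2 y3) x2
    ∧ DifferentiableAt ℝ (fun t => F x1 x2 t y1 y2 y3) x3
    ∧ DifferentiableAt ℝ (fun t => F x1 x2 x3 t y2 y3) y1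
    ∧ DifferentiableAt ℝ (fun t => F x1 x2 x3 y1 t y3) y2

variable {F G x1 x2 x3 y1 y2 y3}

theorem SliceDifferentiableAt.mul (hF : SliceDifferentiableAt F x1 x2 x3 y1 y2 y3)
    (hG : SliceDifferentiableAt G x1 x2 x3 y1 y2 y3) :
    SliceDifferentiableAt (F * G) x1 x2 x3 y1 y2 y3 :=
  ⟨hF.1.mul hG.1, hF.2.1.mul hG.2.1, hF.2.2.1.mul hG.2.2.1, hF.2.2.2.1.mul hG.2.2.2.1,
    hF.2.2.2.2.mul hG.2.2.2.2⟩

theorem screeningX_mul (hF : SliceDifferentiableAt F x1 x2 x3 y1 y2 y3)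
    (hG : SliceDifferentiableAt G x1 x2 x3 y1 y2 y3) :
    screeningX (F * G) x1 x2 x3 y1 y2 y3 =
      screeningX F x1 x2 x3 y1 y2 y3 * G x1 x2 x3 y1 y2 y3
        + F x1 x2 x3 y1 y2 y3 * screeningX G x1 x2 x3 y1 y2 y3 := by
  simp only [screeningX, Pi.mul_apply]
  rw [deriv_fun_mul hF.1 hG.1, deriv_fun_mul hF.2.1 hG.2.1, deriv_fun_mul hF.2.2.1 hG.2.2.1,
    deriv_fun_mul hF.2.2.2.1 hG.2.2.2.1, deriv_fun_mul hF.2.2.2.2 hG.2.2.2.2]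
  ring

theorem screeningX_mul_eq_mul (hF : SliceDifferentiableAt F x1 x2 x3 y1 y2 y3)
    (hG : SliceDifferentiableAt G x1 x2 x3 y1 y2 y3) {a b : ℝ}
    (haF : screeningX F x1 x2 x3 y1 y2 y3 = a * F x1 x2 x3 y1 y2 y3)
    (hbG : screeningX G x1 x2 x3 y1 y2 y3 = b * G x1 x2 x3 y1 y2 y3) :
    screeningX (F * G) x1 x2 x3 y1 y2 y3 = (a + b) * (F * G) x1 x2 x3 y1 y2 y3 := by
  rw [screeningX_mul hF hG, haF, hbG]
  simp only [Pi.mul_apply]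
  ring

theorem screeningX_div (hF : SliceDifferentiableAt F x1 x2 x3 y1 y2 y3)
    (hG : SliceDifferentiableAt G x1 x2 x3 y1 y2 y3) (hG₀ : G x1 x2 x3 y1 y2 y3 ≠ 0) :
    screeningX (F / G) x1 x2 x3 y1 y2 y3 =
      (screeningX F x1 x2 x3 y1 y2 y3 * G x1 x2 x3 y1 y2 y3
        - F x1 x2 x3 y1 y2 y3 * screeningX G x1 x2 x3 y1 y2 y3) / G x1 x2 x3 y1 y2 y3 ^ 2 := by
  simp only [screeningX, Pi.div_apply]
  rw [deriv_fun_div hF.1 hG.1 hG₀, deriv_fun_div hF.2.1 hG.2.1 hG₀, deriv_fun_div hF.2.2.1 hG.2.2.1 hG₀,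
    deriv_fun_div hF.2.2.2.1 hG.2.2.2.1 hG₀, deriv_fun_div hF.2.2.2.2 hG.2.2.2.2 hG₀]
  ring

theorem screeningX_div_eq_zero_of_eq_mul (hF : SliceDifferentiableAt F x1 x2 x3 y1 y2 y3)
    (hG : SliceDifferentiableAt G x1 x2 x3 y1 y2 y3) (hG₀ : G x1 x2 x3 y1 y2 y3 ≠ 0) (c : ℝ)
    (hcF : screeningX F x1 x2 x3 y1 y2 y3 = c * F x1 x2 x3 y1 y2 y3)
    (hcG : screeningX G x1 x2 x3 y1 y2 y3 = c * G x1 x2 x3 y1 y2 y3) :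
    screeningX (F / G) x1 x2 x3 y1 y2 y3 = 0 := by
  rw [screeningX_div hF hG hG₀, hcF, hcG]
  ring

end ScreeningX

section Factors

def tauNum₁ (_x1 x2 _x3 _y1 y2 _y3 : ℝ) : ℝ := x2 * y2

def tauNum₂ (x1 x2 x3 y1 y2 y3 : ℝ) : ℝ := x3 * y3 + x2 * (y2 + y3) + x1 * (y1 + y2 + y3)

def tauDen₁ (x1 x2 _x3 y1 y2 _y3 : ℝ) : ℝ := x2 * y2 + x1 * (y1 + y2)

def tauDen₂ (_x1 x2 x3 _y1 y2 y3 : ℝ) : ℝ := x3 * y3 + x2 * (y2 + y3)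

theorem tauSl3_eq : tauSl3 = tauNum₁ * tauNum₂ / (tauDen₁ * tauDen₂) := rfl

variable {x1 x2 x3 y1 y2 y3 : ℝ}

theorem sliceDifferentiableAt_tauNum₁ : SliceDifferentiableAt tauNum₁ x1 x2 x3 y1 y2 y3 := by
  unfold SliceDifferentiableAt tauNum₁; refine ⟨?_, ?_, ?_, ?_, ?_⟩ <;> fun_prop

theorem sliceDifferentiableAt_tauNum₂ : SliceDifferentiableAt tauNum₂ x1 x2 x3 y1 y2 y3 := by
  unfold SliceDifferentiableAt tauNum₂; refine ⟨?_, ?_, ?_, ?_, ?_⟩ <;> fun_prop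

theorem sliceDifferentiableAt_tauDen₁ : SliceDifferentiableAt tauDen₁ x1 x2 x3 y1 y2 y3 := by
  unfold SliceDifferentiableAt tauDen₁; refine ⟨?_, ?_, ?_, ?_, ?_⟩ <;> fun_prop

theorem sliceDifferentiableAt_tauDen₂ : SliceDifferentiableAt tauDen₂ x1 x2 x3 y1 y2 y3 := by
  unfold SliceDifferentiableAt tauDen₂; refine ⟨?_, ?_, ?_, ?_, ?_⟩ <;> fun_prop

theorem screeningX_tauNum₁ :
    screeningX tauNum₁ x1 x2 x3 y1 y2 y3 = (x2 + x3) * tauNum₁ x1 x2 x3 y1 y2 y3 := by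
  simp (disch := fun_prop) [screeningX, tauNum₁]; ring

theorem screeningX_tauNum₂ :
    screeningX tauNum₂ x1 x2 x3 y1 y2 y3 = (x1 + x2 + x3) * tauNum₂ x1 x2 x3 y1 y2 y3 := by
  simp (disch := fun_prop) [screeningX, tauNum₂]; ring

theorem screeningX_tauDen₁ :
    screeningX tauDen₁ x1 x2 x3 y1 y2 y3 = (x1 + x2 + x3) * tauDen₁ x1 x2 x3 y1 y2 y3 := by
  simp (disch := fun_prop) [screeningX, tauDen₁]; ring

theorem screeningX_tauDen₂ :
    screeningX tauDen₂ x1 x2 x3 y1 y2 y3 = (x2 + x3) * tauDen₂ x1 x2 x3 y1 y2 y3 := by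
  simp (disch := fun_prop) [screeningX, tauDen₂]; ring

end Factors

/-- `τ₁` is annihilated by
`D_X = X₁(X₁+2X₂+2X₃)∂/∂X₁ + X₂(X₂+2X₃)∂/∂X₂ + X₃²∂/∂X₃ − Y₁(X₂+X₃)∂/∂Y₁ − Y₂X₃∂/∂Y₂`. -/
theorem stmt_10 (X1 X2 X3 Y1 Y2 Y3 : ℝ)
    (hA : X2 * Y2 + X1 * (Y1 + Y2) ≠ 0) (hB : X3 * Y3 + X2 * (Y2 + Y3) ≠ 0) :
    X1 * (X1 + 2 * X2 + 2 * X3) * deriv (fun t => tauSl3 t X2 X3 Y1 Y2 Y3) X1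
      + X2 * (X2 + 2 * X3) * deriv (fun t => tauSl3 X1 t X3 Y1 Y2 Y3) X2
      + X3 ^ 2 * deriv (fun t => tauSl3 X1 X2 t Y1 Y2 Y3) X3
      - Y1 * (X2 + X3) * deriv (fun t => tauSl3 X1 X2 X3 t Y2 Y3) Y1
      - Y2 * X3 * deriv (fun t => tauSl3 X1 X2 X3 Y1 t Y3) Y2 = 0 := by
  change screeningX tauSl3 X1 X2 X3 Y1 Y2 Y3 = 0
  rw [tauSl3_eq]
  refine screeningX_div_eq_zero_of_eq_mul
    (sliceDifferentiableAt_tauNum₁.mul sliceDifferentiableAt_tauNum₂)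
    (sliceDifferentiableAt_tauDen₁.mul sliceDifferentiableAt_tauDen₂) (mul_ne_zero hA hB) _
    (screeningX_mul_eq_mul sliceDifferentiableAt_tauNum₁ sliceDifferentiableAt_tauNum₂
      screeningX_tauNum₁ screeningX_tauNum₂) ?_
  rw [add_comm (X2 + X3)]
  exact screeningX_mul_eq_mul sliceDifferentiableAt_tauDen₁ sliceDifferentiableAt_tauDen₂
    screeningX_tauDen₁ screeningX_tauDen₂
end

section
/- The sl₃ generator τ₁ = X₂Y₂(X₃Y₃ + X₂(Y₂+Y₃) + X₁(Y₁+Y₂+Y₃)) / ((X₂Y₂ + X₁(Y₁+Y₂))(X₃Y₃ + X₂(Y₂+Y₃))) is annihilated by the operator D_Y = Y₁(Y₁+2Y₂+2Y₃)∂/∂Y₁ + Y₂(Y₂+2Y₃)∂/∂Y₂ + Y₃²∂/∂Y₃ − X₁(Y₁+Y₂+Y₃)∂/∂X₁ − X₂(Y₂+Y₃)∂/∂X₂ − X₃Y₃∂/∂X₃. -/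
def tauSl3Num (x1 x2 x3 y1 y2 y3 : ℝ) : ℝ :=
  x2 * y2 * (x3 * y3 + x2 * (y2 + y3) + x1 * (y1 + y2 + y3))

def tauSl3Den (x1 x2 x3 y1 y2 y3 : ℝ) : ℝ :=
  (x2 * y2 + x1 * (y1 + y2)) * (x3 * y3 + x2 * (y2 + y3))

/-- The screening operator `D_Y`, acting on functions of `(X₁, X₂, X₃, Y₁, Y₂, Y₃)`. -/
noncomputable def screeningY (f : ℝ → ℝ → ℝ → ℝ → ℝ → ℝ → ℝ) (X1 X2 X3 Y1 Y2 Y3 : ℝ) : ℝ :=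
  Y1 * (Y1 + 2 * Y2 + 2 * Y3) * deriv (fun t => f X1 X2 X3 t Y2 Y3) Y1
    + Y2 * (Y2 + 2 * Y3) * deriv (fun t => f X1 X2 X3 Y1 t Y3) Y2
    + Y3 ^ 2 * deriv (fun t => f X1 X2 X3 Y1 Y2 t) Y3
    - X1 * (Y1 + Y2 + Y3) * deriv (fun t => f t X2 X3 Y1 Y2 Y3) X1
    - X2 * (Y2 + Y3) * deriv (fun t => f X1 t X3 Y1 Y2 Y3) X2
    - X3 * Y3 * deriv (fun t => f X1 X2 t Y1 Y2 Y3) X3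

def SeparatelyDifferentiableAt (f : ℝ → ℝ → ℝ → ℝ → ℝ → ℝ → ℝ) (X1 X2 X3 Y1 Y2 Y3 : ℝ) :
    Prop :=
  DifferentiableAt ℝ (fun t => f t X2 X3 Y1 Y2 Y3) X1 ∧
    DifferentiableAt ℝ (fun t => f X1 t X3 Y1 Y2 Y3) X2 ∧
    DifferentiableAt ℝ (fun t => f X1 X2 t Y1 Y2 Y3) X3 ∧
    DifferentiableAt ℝ (fun t => f X1 X2 X3 t Y2 Y3) Y1 ∧
    DifferentiableAt ℝ (fun t => f X1 X2 X3 Y1 t Y3) Y2 ∧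
    DifferentiableAt ℝ (fun t => f X1 X2 X3 Y1 Y2 t) Y3

section

variable {f g : ℝ → ℝ → ℝ → ℝ → ℝ → ℝ → ℝ} {X1 X2 X3 Y1 Y2 Y3 : ℝ}

theorem screeningY_div (hf : SeparatelyDifferentiableAt f X1 X2 X3 Y1 Y2 Y3)
    (hg : SeparatelyDifferentiableAt g X1 X2 X3 Y1 Y2 Y3) (hg0 : g X1 X2 X3 Y1 Y2 Y3 ≠ 0) :
    screeningY (fun x1 x2 x3 y1 y2 y3 => f x1 x2 x3 y1 y2 y3 / g x1 x2 x3 y1 y2 y3)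
        X1 X2 X3 Y1 Y2 Y3 =
      (screeningY f X1 X2 X3 Y1 Y2 Y3 * g X1 X2 X3 Y1 Y2 Y3
          - f X1 X2 X3 Y1 Y2 Y3 * screeningY g X1 X2 X3 Y1 Y2 Y3) /
        g X1 X2 X3 Y1 Y2 Y3 ^ 2 := by
  obtain ⟨hfX1, hfX2, hfX3, hfY1, hfY2, hfY3⟩ := hf
  obtain ⟨hgX1, hgX2, hgX3, hgY1, hgY2, hgY3⟩ := hg
  simp only [screeningY]
  rw [deriv_fun_div hfX1 hgX1 hg0, deriv_fun_div hfX2 hgX2 hg0, deriv_fun_div hfX3 hgX3 hg0,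
    deriv_fun_div hfY1 hgY1 hg0, deriv_fun_div hfY2 hgY2 hg0, deriv_fun_div hfY3 hgY3 hg0]
  ring

theorem screeningY_div_eq_zero {μ : ℝ} (hf : SeparatelyDifferentiableAt f X1 X2 X3 Y1 Y2 Y3)
    (hg : SeparatelyDifferentiableAt g X1 X2 X3 Y1 Y2 Y3) (hg0 : g X1 X2 X3 Y1 Y2 Y3 ≠ 0)
    (hDf : screeningY f X1 X2 X3 Y1 Y2 Y3 = μ * f X1 X2 X3 Y1 Y2 Y3)
    (hDg : screeningY g X1 X2 X3 Y1 Y2 Y3 = μ * g X1 X2 X3 Y1 Y2 Y3) :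
    screeningY (fun x1 x2 x3 y1 y2 y3 => f x1 x2 x3 y1 y2 y3 / g x1 x2 x3 y1 y2 y3)
      X1 X2 X3 Y1 Y2 Y3 = 0 := by
  rw [screeningY_div hf hg hg0, hDf, hDg]
  ring

end

section

variable (X1 X2 X3 Y1 Y2 Y3 : ℝ)

theorem separatelyDifferentiableAt_tauSl3Num :
    SeparatelyDifferentiableAt tauSl3Num X1 X2 X3 Y1 Y2 Y3 := by
  unfold SeparatelyDifferentiableAt tauSl3Num
  and_intros <;> fun_prop

theorem separatelyDifferentiableAt_tauSl3Den :
    SeparatelyDifferentiableAt tauSl3Den X1 X2 X3 Y1 Y2 Y3 := by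
  unfold SeparatelyDifferentiableAt tauSl3Den
  and_intros <;> fun_prop

theorem screeningY_tauSl3Num :
    screeningY tauSl3Num X1 X2 X3 Y1 Y2 Y3 = Y3 * tauSl3Num X1 X2 X3 Y1 Y2 Y3 := by
  simp (disch := fun_prop) only [screeningY, tauSl3Num, deriv_fun_mul, deriv_fun_add, deriv_const',
    deriv_id'', deriv_const_mul_id', deriv_const_add_id']
  ring

theorem screeningY_tauSl3Den :
    screeningY tauSl3Den X1 X2 X3 Y1 Y2 Y3 = Y3 * tauSl3Den X1 X2 X3 Y1 Y2 Y3 := by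
  simp (disch := fun_prop) only [screeningY, tauSl3Den, deriv_fun_mul, deriv_fun_add, deriv_const',
    deriv_id'', deriv_const_mul_id', deriv_const_add_id']
  ring

end

/-- `τ₁` is annihilated by
`D_Y = Y₁(Y₁+2Y₂+2Y₃)∂/∂Y₁ + Y₂(Y₂+2Y₃)∂/∂Y₂ + Y₃²∂/∂Y₃
      − X₁(Y₁+Y₂+Y₃)∂/∂X₁ − X₂(Y₂+Y₃)∂/∂X₂ − X₃Y₃∂/∂X₃`. -/
theorem stmt_11 (X1 X2 X3 Y1 Y2 Y3 : ℝ)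
    (hA : X2 * Y2 + X1 * (Y1 + Y2) ≠ 0) (hB : X3 * Y3 + X2 * (Y2 + Y3) ≠ 0) :
    Y1 * (Y1 + 2 * Y2 + 2 * Y3) * deriv (fun t => tauSl3 X1 X2 X3 t Y2 Y3) Y1
      + Y2 * (Y2 + 2 * Y3) * deriv (fun t => tauSl3 X1 X2 X3 Y1 t Y3) Y2
      + Y3 ^ 2 * deriv (fun t => tauSl3 X1 X2 X3 Y1 Y2 t) Y3
      - X1 * (Y1 + Y2 + Y3) * deriv (fun t => tauSl3 t X2 X3 Y1 Y2 Y3) X1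
      - X2 * (Y2 + Y3) * deriv (fun t => tauSl3 X1 t X3 Y1 Y2 Y3) X2
      - X3 * Y3 * deriv (fun t => tauSl3 X1 X2 t Y1 Y2 Y3) X3 = 0 :=
  screeningY_div_eq_zero (f := tauSl3Num) (g := tauSl3Den)
    (separatelyDifferentiableAt_tauSl3Num ..) (separatelyDifferentiableAt_tauSl3Den ..)
    (mul_ne_zero hA hB) (screeningY_tauSl3Num ..) (screeningY_tauSl3Den ..)
end

section
/- Let f₂ = −2X₁X₂X₃X₄Y₁Y₂²Y₃(X₂Y₁+(X₃+X₄)(Y₁+Y₂)+X₄Y₃)(X₃Y₃+X₂(Y₂+Y₃)+X₁(Y₁+Y₂+Y₃)) / ((X₂Y₂+X₁(Y₁+Y₂))²(X₂Y₁+X₃(Y₁+Y₂))(X₃Y₃+X₂(Y₂+Y₃))(X₃Y₂+X₄(Y₂+Y₃))²), and let k₁ = X₂Y₂(X₃Y₃+X₂(Y₂+Y₃)+X₁(Y₁+Y₂+Y₃))/((X₂Y₂+X₁(Y₁+Y₂))(X₃Y₃+X₂(Y₂+Y₃))), k₂ = X₃Y₂(X₂Y₁+(X₃+X₄)(Y₁+Y₂)+X₄Y₃)/((X₂Y₁+X₃(Y₁+Y₂))(X₃Y₂+X₄(Y₂+Y₃))).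 Then f₂ = −2(k₁−1)k₁(k₂−1)k₂ as rational functions in X₁,…,X₄,Y₁,Y₂,Y₃. -/
noncomputable def k1 (X1 X2 X3 Y1 Y2 Y3 : ℝ) : ℝ :=
  X2 * Y2 * (X3 * Y3 + X2 * (Y2 + Y3) + X1 * (Y1 + Y2 + Y3)) /
    ((X2 * Y2 + X1 * (Y1 + Y2)) * (X3 * Y3 + X2 * (Y2 + Y3)))

noncomputable def k2 (X2 X3 X4 Y1 Y2 Y3 : ℝ) : ℝ :=
  X3 * Y2 * (X2 * Y1 + (X3 + X4) * (Y1 + Y2) + X4 * Y3) /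
    ((X2 * Y1 + X3 * (Y1 + Y2)) * (X3 * Y2 + X4 * (Y2 + Y3)))

set_option maxHeartbeats 1000000 in
/-- `f₂ = −2(k₁−1)k₁(k₂−1)k₂` as rational functions. -/
theorem stmt_16 (X1 X2 X3 X4 Y1 Y2 Y3 : ℝ)
    (h1 : X2 * Y2 + X1 * (Y1 + Y2) ≠ 0)
    (h2 : X3 * Y3 + X2 * (Y2 + Y3) ≠ 0)
    (h3 : X2 * Y1 + X3 * (Y1 + Y2) ≠ 0)
    (h4 : X3 * Y2 + X4 * (Y2 + Y3) ≠ 0) :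
    -(2 * X1 * X2 * X3 * X4 * Y1 * Y2 ^ 2 * Y3
        * (X2 * Y1 + (X3 + X4) * (Y1 + Y2) + X4 * Y3)
        * (X3 * Y3 + X2 * (Y2 + Y3) + X1 * (Y1 + Y2 + Y3))) /
      ((X2 * Y2 + X1 * (Y1 + Y2)) ^ 2 * (X2 * Y1 + X3 * (Y1 + Y2))
        * (X3 * Y3 + X2 * (Y2 + Y3)) * (X3 * Y2 + X4 * (Y2 + Y3)) ^ 2)
    = -2 * (k1 X1 X2 X3 Y1 Y2 Y3 - 1) * k1 X1 X2 X3 Y1 Y2 Y3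
        * (k2 X2 X3 X4 Y1 Y2 Y3 - 1) * k2 X2 X3 X4 Y1 Y2 Y3 := by
  have hc : (X3 * Y3 + X2 * (Y2 + Y3)) * (X2 * Y1 + X3 * (Y1 + Y2)) ≠ 0 :=
    mul_ne_zero h2 h3
  have e1 : k1 X1 X2 X3 Y1 Y2 Y3 - 1
      = (-(X1 * Y3 * (X2 * Y1 + X3 * (Y1 + Y2)))) /
        ((X2 * Y2 + X1 * (Y1 + Y2)) * (X3 * Y3 + X2 * (Y2 + Y3))) := by
    unfold k1
    field_simp
    ring
  have e2 : k2 X2 X3 X4 Y1 Y2 Y3 - 1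
      = (-(X4 * Y1 * (X3 * Y3 + X2 * (Y2 + Y3)))) /
        ((X2 * Y1 + X3 * (Y1 + Y2)) * (X3 * Y2 + X4 * (Y2 + Y3))) := by
    unfold k2
    field_simp
    ring
  rw [e1, e2]
  unfold k1 k2
  clear hc
  revert h1 h2 h3 h4
  generalize X2 * Y2 + X1 * (Y1 + Y2) = d1
  generalize X3 * Y3 + X2 * (Y2 + Y3) = d2
  generalize X2 * Y1 + X3 * (Y1 + Y2) = d3
  generalize X3 * Y2 + X4 * (Y2 + Y3) = d4
  intro h1 h2 h3 h4
  field_simp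
end
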